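/- In many-logic modal structures over 𝕃, defining v_w(◇A) as the supremum in L_w of the up-interpretations in L_w of the values of A at R-accessible worlds, one has v_w(◇A) = v_w(¬□¬A) at every world w of every structure. -/

import Mathlib

/-- The six-valued lattice `L6` of the logic `LET_K^+`:
`F < F₀ < n, b < T₀ < T` with `n` and `b` incomparable. -/
inductive L6 : Type
  | T | T0 | b | n | F0 | F
  deriving DecidableEq

instance : Fintype L6 where
  elems := {L6.T, L6.T0, L6.b, L6.n, L6.F0, L6.F}
  complete := fun x => by cases x <;> decide

namespace L6

/-- The order of `L6` as a Boolean-valued relation. -/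
def ble : L6 → L6 → Bool := fun x y =>
  x == y || x == F || y == T || (x == F0 && !(y == F)) || (y == T0 && !(x == T) && !(x == F))

/-- Binary meet of `L6` (the only incomparable pair `n, b` has meet `F₀`). -/
def binf (x y : L6) : L6 := if ble x y then x else if ble y x then y else F0

/-- Binary join of `L6` (the only incomparable pair `n, b` has join `T₀`). -/
def bsup (x y : L6) : L6 := if ble x y then y else if ble y x then x else T0

private theorem hrefl : ∀ x, ble x x = true := by decide
private theorem htrans : ∀ x y z, ble x y = true → ble y z = true → ble x z = true := by decide
private theorem hantisymm : ∀ x y, ble x y = true → ble y x = true → x = y := by decide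
private theorem hsl : ∀ x y, ble x (bsup x y) = true := by decide
private theorem hsr : ∀ x y, ble y (bsup x y) = true := by decide
private theorem hsle : ∀ x y z, ble x z = true → ble y z = true → ble (bsup x y) z = true := by
  decide
private theorem hil : ∀ x y, ble (binf x y) x = true := by decide
private theorem hir : ∀ x y, ble (binf x y) y = true := by decide
private theorem hile : ∀ x y z, ble x y = true → ble x z = true → ble x (binf y z) = true := by
  decide

instance : Lattice L6 where
  le x y := ble x y = true
  le_refl := hrefl
  le_trans := htrans
  le_antisymm := hantisymm
  sup := bsup
  le_sup_left := hsl
  le_sup_right := hsr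
  sup_le := hsle
  inf := binf
  inf_le_left := hil
  inf_le_right := hir
  le_inf := hile

instance : DecidableRel ((· ≤ ·) : L6 → L6 → Prop) :=
  fun x y => inferInstanceAs (Decidable (ble x y = true))

end L6

open L6 in
/-- The carriers of the nine lattices underlying the logics of the family 𝕃. -/
def carriersLAT : List (Set L6) :=
  [ Set.univ, {T0, b, n, F0}, {T, b, n, F}, {T0, b, F0}, {T, b, F},
    {T0, n, F0}, {T, n, F}, {T0, F0}, {T, F} ]

/-- The twist negation of L6: swaps T with F and T₀ with F₀, fixes b and n. -/
def neg6 : L6 → L6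
  | L6.T => L6.F
  | L6.F => L6.T
  | L6.T0 => L6.F0
  | L6.F0 => L6.T0
  | L6.b => L6.b
  | L6.n => L6.n

/-- Formulas of the modal language with negation, □ and ◇. -/
inductive Fm : Type
  | atom : Nat → Fm
  | neg : Fm → Fm
  | box : Fm → Fm
  | dia : Fm → Fm

/-! The twist negation is an order-reversing involution compatible with the inclusions into `L6`,
so at each world it maps `{y | y ≤ ¬a}` onto `{y | a ≤ y}`: the negation of the down-interpretation
of `¬a` is the up-interpretation of `a`. Since it also turns the infimum defining `□` into a
supremum, `¬□¬A` becomes the supremum of the up-interpretations of `A`, which is `◇A`. -/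

theorem neg6_le_neg6_iff (x y : L6) : neg6 x ≤ neg6 y ↔ y ≤ x := by
  revert x y; decide

theorem neg6_involutive : Function.Involutive neg6 := by
  intro x; cases x <;> rfl

theorem involutive_of_injective_of_comp {α β : Type*} {incl : α → β} {ng : α → α}
    {neg : β → β} (hinj : Function.Injective incl)
    (hng : ∀ x, incl (ng x) = neg (incl x)) (hneg : Function.Involutive neg) :
    Function.Involutive ng := fun x =>
  hinj <| by rw [hng, hng, hneg]

section Interpretation

variable {P L : Type*} [LE P] [CompleteLattice L]

/-- The paper's `x^L_up`. -/
def upInterp (incl : L → P) (x : P) : L := sInf {y | x ≤ incl y}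

/-- The paper's `x^L_down`. -/
def downInterp (incl : L → P) (x : P) : L := sSup {y | incl y ≤ x}

variable {incl : L → P} {ng : L → L} {neg : P → P}

theorem neg_downInterp_neg (hng : ∀ x, incl (ng x) = neg (incl x))
    (hngsup : ∀ S : Set L, ng (sSup S) = sInf (ng '' S)) (hnginv : Function.Involutive ng)
    (hneg : ∀ a b, neg a ≤ neg b ↔ b ≤ a) (a : P) :
    ng (downInterp incl (neg a)) = upInterp incl a := by
  rw [downInterp, upInterp, hngsup, hnginv.image_eq_preimage_symm]
  congr 1
  ext y
  simp only [Set.mem_preimage, Set.mem_ofPred_eq, hng, hneg]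

end Interpretation

theorem setOf_exists_and_eq {α β : Type*} (p : α → Prop) (f : α → β) :
    {x | ∃ a, p a ∧ x = f a} = f '' {a | p a} := by
  ext
  simp [eq_comm]

theorem dia_eq_neg_box_neg_general
    {W : Type*} (R : W → W → Prop)
    (Lw : W → Type*) [∀ w, CompleteLattice (Lw w)]
    (incl : ∀ w, Lw w → L6)
    (hord : ∀ w, ∀ x y : Lw w, x ≤ y ↔ incl w x ≤ incl w y)
    (ng : ∀ w, Lw w → Lw w)
    (hng : ∀ w, ∀ x : Lw w, incl w (ng w x) = neg6 (incl w x))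
    (hnginf : ∀ w, ∀ A : Set (Lw w), ng w (sInf A) = sSup (ng w '' A))
    (hngsup : ∀ w, ∀ A : Set (Lw w), ng w (sSup A) = sInf (ng w '' A))
    (v : ∀ w, Fm → Lw w)
    (hvneg : ∀ w A, v w (Fm.neg A) = ng w (v w A))
    (hvbox : ∀ w A, v w (Fm.box A) =
      sInf {x : Lw w | ∃ w', R w w' ∧
        x = sSup {y : Lw w | incl w y ≤ incl w' (v w' A)}})
    (hvdia : ∀ w A, v w (Fm.dia A) =
      sSup {x : Lw w | ∃ w', R w w' ∧
        x = sInf {y : Lw w | incl w' (v w' A) ≤ incl w y}})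
    (w : W) (A : Fm) :
    v w (Fm.dia A) = v w (Fm.neg (Fm.box (Fm.neg A))) := by
  have hinj := (OrderEmbedding.ofMapLEIff (incl w) fun x y => (hord w x y).symm).injective
  have hnginv := involutive_of_injective_of_comp hinj (hng w) neg6_involutive
  have up_eq_neg_down : ∀ w', upInterp (incl w) (incl w' (v w' A)) =
      ng w (downInterp (incl w) (incl w' (v w' (Fm.neg A)))) := fun w' => by
    rw [hvneg, hng, neg_downInterp_neg (hng w) (hngsup w) hnginv neg6_le_neg6_iff]
  rw [hvdia, hvneg, hvbox, hnginf, setOf_exists_and_eq, setOf_exists_and_eq, Set.image_image]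
  exact congrArg sSup (Set.image_congr fun w' _ => up_eq_neg_down w')

/-- In many-logic modal structures over 𝕃, defining v_w(◇A) as the supremum in
the local lattice of the up-interpretations of the values of A at accessible
worlds, one has v_w(◇A) = v_w(¬□¬A) at every world.  Here each world carries a
complete lattice which is a dc-sublattice of L6 (order-reflecting inclusion with
range one of the nine carriers), negation is the twist negation (coinciding with
neg6 via the inclusion, an order-reversing involutive bijection carrying infima
to suprema and conversely, with x ≤ ¬y iff ¬x ≥ y), v_w(□A) is the infimum of
the down-interpretations and v_w(◇A) the supremum of the up-interpretations of
the values at accessible worlds. -/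
theorem dia_eq_neg_box_neg
    {W : Type*} (R : W → W → Prop)
    (Lw : W → Type*) [∀ w, CompleteLattice (Lw w)]
    (incl : ∀ w, Lw w → L6)
    (hord : ∀ w, ∀ x y : Lw w, x ≤ y ↔ incl w x ≤ incl w y)
    (hcar : ∀ w, Set.range (incl w) ∈ carriersLAT)
    (ng : ∀ w, Lw w → Lw w)
    (hng : ∀ w, ∀ x : Lw w, incl w (ng w x) = neg6 (incl w x))
    (hngbij : ∀ w, Function.Bijective (ng w))
    (hnginf : ∀ w, ∀ A : Set (Lw w), ng w (sInf A) = sSup (ng w '' A))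
    (hngsup : ∀ w, ∀ A : Set (Lw w), ng w (sSup A) = sInf (ng w '' A))
    (hnggal : ∀ w, ∀ x y : Lw w, x ≤ ng w y ↔ y ≤ ng w x)
    (v : ∀ w, Fm → Lw w)
    (hvneg : ∀ w A, v w (Fm.neg A) = ng w (v w A))
    (hvbox : ∀ w A, v w (Fm.box A) =
      sInf {x : Lw w | ∃ w', R w w' ∧
        x = sSup {y : Lw w | incl w y ≤ incl w' (v w' A)}})
    (hvdia : ∀ w A, v w (Fm.dia A) =
      sSup {x : Lw w | ∃ w', R w w' ∧
        x = sInf {y : Lw w | incl w' (v w' A) ≤ incl w y}})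
    (w : W) (A : Fm) :
    v w (Fm.dia A) = v w (Fm.neg (Fm.box (Fm.neg A))) :=
  dia_eq_neg_box_neg_general R Lw incl hord ng hng hnginf hngsup v hvneg hvbox hvdia w A
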